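/- arXiv:2102.04373 — 5 statements merged into one kernel-verified Lean document; each statement's English description precedes it below -/
import Mathlib

section
/- Let z := wᵀx with bounds z ∈ [L, U], L < 0 < U, and b = 0. Then y = max(0, z) if and only if there exist σ ∈ {0,1} and zᵃ, zᵇ ∈ ℝ with z = zᵃ + zᵇ, zᵃ ≤ 0, zᵇ ≥ 0, y = zᵇ, σL ≤ zᵃ ≤ 0, and 0 ≤ zᵇ ≤ (1-σ)U. -/
/-- Correctness of the extended (disjunctive-programming) formulation of a
ReLU node with zero bias. -/
theorem stmt_2 (L U z y : ℝ) (hL : L < 0) (hU : 0 < U) (hzL : L ≤ z) (hzU : z ≤ U) :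
    y = max 0 z ↔
      ∃ σ za zb : ℝ, (σ = 0 ∨ σ = 1) ∧
        z = za + zb ∧ za ≤ 0 ∧ zb ≥ 0 ∧ y = zb ∧
        σ * L ≤ za ∧ za ≤ 0 ∧ 0 ≤ zb ∧ zb ≤ (1 - σ) * U := by
  constructor
  · intro hy
    rcases le_or_gt z 0 with h | h
    · exact ⟨1, z, 0, Or.inr rfl, by ring, h, le_refl 0, by simp [hy, max_eq_left h],
        by linarith, h, le_refl 0, by nlinarith⟩
    · exact ⟨0, 0, z, Or.inl rfl, by ring, le_refl 0, le_of_lt h,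
        by simp [hy, max_eq_right h.le], by simp, le_refl 0, h.le, by nlinarith⟩
  · rintro ⟨σ, za, zb, hσ, hz, hza, hzb, hy, h1, h2, h3, h4⟩
    rcases hσ with rfl | rfl
    · have : za = 0 := le_antisymm h2 (by linarith)
      rw [hy, max_eq_right (by linarith : (0:ℝ) ≤ z)]
      linarith
    · have : zb = 0 := le_antisymm (by linarith [h4]) h3
      rw [hy, this, max_eq_left (by nlinarith : z ≤ 0)]
end

section
/- Let S₁,…,S_N be a partition of {1,…,η} and suppose for each n and each x in the feasible set: LBₙᵃ ≤ Σ_{i∈Sₙ} w_i x_i ≤ UBₙᵃ when wᵀx + b ≤ 0, and LBₙᵇ ≤ Σ_{i∈Sₙ} w_i x_i ≤ UBₙᵇ when wᵀx + b ≥ 0. Then y = max(0, wᵀx + b) if and only if there exist σ ∈ {0,1} and z₁ᵇ,…,z_Nᵇ ∈ ℝ satisfying: Σₙ(Σ_{i∈Sₙ} w_i x_i − zₙᵇ) + σb ≤ 0; Σₙ zₙᵇ + (1−σ)b ≥ 0; y = Σₙ zₙᵇ + (1−σ)b; σLBₙᵃ ≤ Σ_{i∈Sₙ} w_i x_i − zₙᵇ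 ≤ σUBₙᵃ for all n; and (1−σ)LBₙᵇ ≤ zₙᵇ ≤ (1−σ)UBₙᵇ for all n. -/
/-- Exactness of the partition-based MILP formulation of a ReLU node. -/
theorem stmt_4 (η N : ℕ) (w : Fin η → ℝ) (b : ℝ)
    (S : Fin N → Finset (Fin η))
    (hdisj : ∀ n n' : Fin N, n ≠ n' → Disjoint (S n) (S n'))
    (hcover : Finset.univ.biUnion S = (Finset.univ : Finset (Fin η)))
    (X : Set (Fin η → ℝ))
    (LBa UBa LBb UBb : Fin N → ℝ)
    (hA : ∀ x ∈ X, (∑ i, w i * x i) + b ≤ 0 →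
      ∀ n, LBa n ≤ (∑ i ∈ S n, w i * x i) ∧ (∑ i ∈ S n, w i * x i) ≤ UBa n)
    (hB : ∀ x ∈ X, (∑ i, w i * x i) + b ≥ 0 →
      ∀ n, LBb n ≤ (∑ i ∈ S n, w i * x i) ∧ (∑ i ∈ S n, w i * x i) ≤ UBb n) :
    ∀ x ∈ X, ∀ y : ℝ,
      (y = max 0 ((∑ i, w i * x i) + b) ↔
        ∃ (σ : ℝ) (zb : Fin N → ℝ), (σ = 0 ∨ σ = 1) ∧
          (∑ n, ((∑ i ∈ S n, w i * x i) - zb n)) + σ * b ≤ 0 ∧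
          (∑ n, zb n) + (1 - σ) * b ≥ 0 ∧
          y = (∑ n, zb n) + (1 - σ) * b ∧
          (∀ n, σ * LBa n ≤ (∑ i ∈ S n, w i * x i) - zb n ∧
                (∑ i ∈ S n, w i * x i) - zb n ≤ σ * UBa n) ∧
          (∀ n, (1 - σ) * LBb n ≤ zb n ∧ zb n ≤ (1 - σ) * UBb n)) := by
  intro x hx y
  have hkey : (∑ n, ∑ i ∈ S n, w i * x i) = ∑ i, w i * x i := by
    rw [← Finset.sum_biUnion, hcover]
    intro n _ n' _ hne
    exact hdisj n n' hne
  constructor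
  · intro hy
    rcases le_or_gt ((∑ i, w i * x i) + b) 0 with hle | hgt
    · refine ⟨1, fun _ => 0, Or.inr rfl, ?_, ?_, ?_, ?_, ?_⟩
      · simpa [hkey] using hle
      · simp
      · simp [hy, max_eq_left hle]
      · intro n
        simpa using hA x hx hle n
      · intro n; simp
    · refine ⟨0, fun n => ∑ i ∈ S n, w i * x i, Or.inl rfl, ?_, ?_, ?_, ?_, ?_⟩
      · simp
      · simpa [hkey] using hgt.le
      · simp [hkey, hy, max_eq_right hgt.le]
      · intro n; simp
      · intro n
        simpa using hB x hx hgt.le n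
  · rintro ⟨σ, zb, hσ, h1, h2, h3, h4, h5⟩
    rcases hσ with rfl | rfl
    · have hz : ∀ n, zb n = ∑ i ∈ S n, w i * x i := by
        intro n
        have := h4 n
        simp at this
        linarith [this.1, this.2]
      have hs : (∑ n, zb n) = ∑ i, w i * x i := by
        rw [← hkey]; exact Finset.sum_congr rfl fun n _ => hz n
      rw [h3, hs]
      simp at h2 ⊢
      rw [hs] at h2
      exact h2
    · have hz : ∀ n, zb n = 0 := by
        intro n
        have := h5 n
        simp at this
        linarith [this.1, this.2]
      have hs : (∑ n, zb n) = 0 := by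
        exact Finset.sum_eq_zero fun n _ => hz n
      have hle : (∑ i, w i * x i) + b ≤ 0 := by
        have : (∑ n, ((∑ i ∈ S n, w i * x i) - zb n)) = ∑ i, w i * x i := by
          rw [Finset.sum_sub_distrib, hs, hkey]; ring
        rw [this] at h1; simpa using h1
      rw [h3, hs]
      simp [max_eq_left hle]
end

section
/- For σ ∈ {0,1} and bounds LB_i ≤ w_i x_i ≤ UB_i with LB_i ≤ 0 ≤ UB_i summed appropriately, any point (x, y, σ) with y = max(0, wᵀx + b) satisfies y ≤ Σ_{i∈I_j} w_i x_i + σ(b + Σ_{i∈I∖I_j} UB_i) + (σ−1)(Σ_{i∈I_j} LB_i) for every subset I_j ⊆ {1,…,η}, where σ = 1 when wᵀx + b > 0 and σ = 0 when wᵀx + b ≤ 0. -/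
/-- Validity of the full exponential family of convex-hull inequalities of
Anderson et al. for a ReLU node. -/
theorem stmt_8 (η : ℕ) (w : Fin η → ℝ) (b : ℝ) (LB UB : Fin η → ℝ)
    (x : Fin η → ℝ) (y σ : ℝ)
    (hbounds : ∀ i, LB i ≤ w i * x i ∧ w i * x i ≤ UB i)
    (hy : y = max 0 ((∑ i, w i * x i) + b))
    (hσ1 : (∑ i, w i * x i) + b > 0 → σ = 1)
    (hσ0 : (∑ i, w i * x i) + b ≤ 0 → σ = 0) :
    ∀ I : Finset (Fin η),
      y ≤ (∑ i ∈ I, w i * x i) + σ * (b + ∑ i ∈ Iᶜ, UB i)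
            + (σ - 1) * (∑ i ∈ I, LB i) := by
  intro I
  rcases le_or_gt ((∑ i, w i * x i) + b) 0 with h | h
  · have hσ := hσ0 h
    subst hσ
    have h1 : ∀ i ∈ I, LB i ≤ w i * x i := fun i _ => (hbounds i).1
    have := Finset.sum_le_sum h1
    simp only [zero_mul, zero_sub]
    have hy0 : y = 0 := by rw [hy, max_eq_left h]
    rw [hy0]
    linarith
  · have hσ := hσ1 h
    subst hσ
    have hy0 : y = (∑ i, w i * x i) + b := by rw [hy, max_eq_right h.le]
    have hsplit : (∑ i, w i * x i) = (∑ i ∈ I, w i * x i) + ∑ i ∈ Iᶜ, w i * x i :=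
      (Finset.sum_add_sum_compl I _).symm
    have h2 : ∀ i ∈ Iᶜ, w i * x i ≤ UB i := fun i _ => (hbounds i).2
    have := Finset.sum_le_sum h2
    rw [hy0, hsplit]
    ring_nf
    linarith
end

section
/- If N = η and each partition is a singleton Sₙ = {n}, then the continuous relaxation of the partition-based formulation (with auxiliary variables zₙᵇ and bounds derived from x_n ∈ [l_n, u_n]) describes exactly the convex hull of the graph {(x, y) : y = max(0, wᵀx + b), l ≤ x ≤ u}, projected onto (x, y) after also projecting out σ. -/
/-!
The relaxation is the disjunctive (Balas) formulation of the two linear pieces of the ReLU graph.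
It is convex, being the projection of a polyhedron, and contains the graph (take `σ = 1` on the
inactive piece and `σ = 0` on the active one). Conversely, in a relaxed point with multiplier `σ`
the scaled copies `w n * xₙᵃ = σ * (w n * xa n)` and `w n * xₙᵇ = (1 - σ) * (w n * xb n)` define
points `xa`, `xb` of the box, and the point is `σ • (xa, 0) + (1 - σ) • (xb, wᵀxb + b)`; the
aggregated constraints put `(xa, 0)` on the inactive piece when `σ ≠ 0` and `(xb, wᵀxb + b)` on
the active piece when `σ ≠ 1`.
-/

open Finset Set

theorem smul_add_one_sub_smul_mem_convexHull {E : Type*} [AddCommGroup E] [Module ℝ E]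
    {s : Set E} {x y : E} {t : ℝ} (ht₀ : 0 ≤ t) (ht₁ : t ≤ 1)
    (hx : t ≠ 0 → x ∈ s) (hy : t ≠ 1 → y ∈ s) : t • x + (1 - t) • y ∈ convexHull ℝ s := by
  rcases eq_or_ne t 0 with rfl | h₀
  · simpa using subset_convexHull ℝ s (hy zero_ne_one)
  rcases eq_or_ne t 1 with rfl | h₁
  · simpa using subset_convexHull ℝ s (hx one_ne_zero)
  exact convex_convexHull ℝ s (subset_convexHull ℝ s (hx h₀)) (subset_convexHull ℝ s (hy h₁))
    ht₀ (sub_nonneg.2 ht₁) (add_sub_cancel t 1)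

theorem mul_mem_uIcc_mul_of_mem_Icc {c l u x : ℝ} (hx : x ∈ Icc l u) :
    c * x ∈ uIcc (c * l) (c * u) := by
  rw [← image_const_mul_uIcc]
  exact mem_image_of_mem _ (Icc_subset_uIcc hx)

theorem exists_mem_Icc_of_mul_min_le {c s t l u : ℝ} (hs : 0 ≤ s) (hlu : l ≤ u)
    (h₁ : s * min (c * l) (c * u) ≤ t) (h₂ : t ≤ s * max (c * l) (c * u)) :
    ∃ x ∈ Icc l u, t = s * (c * x) := by
  rcases hs.eq_or_lt with rfl | hs
  · exact ⟨l, left_mem_Icc.2 hlu, by simp_all [le_antisymm_iff]⟩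
  have ht : t / s ∈ uIcc (c * l) (c * u) :=
    ⟨(le_div_iff₀' hs).2 h₁, (div_le_iff₀' hs).2 h₂⟩
  rw [← image_const_mul_uIcc, uIcc_of_le hlu] at ht
  obtain ⟨x, hx, hcx⟩ := ht
  exact ⟨x, hx, by rw [show c * x = t / s from hcx, mul_div_cancel₀ t hs.ne']⟩

theorem mul_add_mul_mem_scaled_bounds {m M s s' t t' α β : ℝ} (hα : 0 ≤ α) (hβ : 0 ≤ β)
    (h : s * m ≤ t ∧ t ≤ s * M) (h' : s' * m ≤ t' ∧ t' ≤ s' * M) :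
    (α * s + β * s') * m ≤ α * t + β * t' ∧ α * t + β * t' ≤ (α * s + β * s') * M :=
  ⟨by linear_combination mul_le_mul_of_nonneg_left h.1 hα + mul_le_mul_of_nonneg_left h'.1 hβ,
    by linear_combination mul_le_mul_of_nonneg_left h.2 hα + mul_le_mul_of_nonneg_left h'.2 hβ⟩

section
variable {ι : Type*} [Fintype ι]

/-- `w n * p.1 n - zb n` and `zb n` stand for `w n * xₙᵃ` and `w n * xₙᵇ`. -/
def reluRelaxation (w : ι → ℝ) (b : ℝ) (l u : ι → ℝ) : Set ((ι → ℝ) × ℝ) :=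
  {p | ∃ (σ : ℝ) (zb : ι → ℝ),
        0 ≤ σ ∧ σ ≤ 1 ∧
        (∑ n, (w n * p.1 n - zb n)) + σ * b ≤ 0 ∧
        (∑ n, zb n) + (1 - σ) * b ≥ 0 ∧
        p.2 = (∑ n, zb n) + (1 - σ) * b ∧
        (∀ n, σ * min (w n * l n) (w n * u n) ≤ w n * p.1 n - zb n ∧
              w n * p.1 n - zb n ≤ σ * max (w n * l n) (w n * u n)) ∧
        (∀ n, (1 - σ) * min (w n * l n) (w n * u n) ≤ zb n ∧
              zb n ≤ (1 - σ) * max (w n * l n) (w n * u n))}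

def reluGraph (w : ι → ℝ) (b : ℝ) (l u : ι → ℝ) : Set ((ι → ℝ) × ℝ) :=
  {p | (∀ n, l n ≤ p.1 n ∧ p.1 n ≤ u n) ∧ p.2 = max 0 ((∑ n, w n * p.1 n) + b)}

variable {w l u : ι → ℝ} {b : ℝ}

theorem reluGraph_subset_reluRelaxation : reluGraph w b l u ⊆ reluRelaxation w b l u := by
  rintro p ⟨hbox, hy⟩
  have hwx n : w n * p.1 n ∈ uIcc (w n * l n) (w n * u n) := mul_mem_uIcc_mul_of_mem_Icc (hbox n)
  rcases le_total ((∑ n, w n * p.1 n) + b) 0 with h | h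
  · exact ⟨1, 0, zero_le_one, le_rfl, by simpa using h, by simp, by simp [hy, h],
      fun n => by simp only [one_mul, Pi.zero_apply, sub_zero]; exact hwx n, fun n => by simp⟩
  · exact ⟨0, fun n => w n * p.1 n, le_rfl, zero_le_one, by simp, by simpa using h,
      by simp [hy, h], fun n => by simp,
      fun n => by simp only [sub_zero, one_mul]; exact hwx n⟩

theorem convex_reluRelaxation : Convex ℝ (reluRelaxation w b l u) := by
  rintro p ⟨σ, z, hσ₀, hσ₁, hneg, hpos, hy, hza, hzb⟩
    q ⟨σ', z', hσ₀', hσ₁', hneg', hpos', hy', hza', hzb'⟩ α β hα hβ hαβ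
  obtain rfl : α = 1 - β := eq_sub_of_add_eq hαβ
  have hsum (f g : ι → ℝ) :
      ∑ n, ((1 - β) * f n + β * g n) = (1 - β) * ∑ n, f n + β * ∑ n, g n := by
    simp only [sum_add_distrib, mul_sum]
  have hsum_sub : ∑ n, (w n * ((1 - β) * p.1 n + β * q.1 n) - ((1 - β) * z n + β * z' n)) =
      (1 - β) * ∑ n, (w n * p.1 n - z n) + β * ∑ n, (w n * q.1 n - z' n) := by
    rw [← hsum]; exact sum_congr rfl fun n _ => by ring
  refine ⟨(1 - β) * σ + β * σ', (1 - β) • z + β • z', by positivity, by nlinarith, ?_, ?_, ?_,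
    fun n => ?_, fun n => ?_⟩ <;>
    simp only [Prod.fst_add, Prod.smul_fst, Prod.snd_add, Prod.smul_snd, Pi.add_apply,
      Pi.smul_apply, smul_eq_mul]
  · linear_combination
      hsum_sub + mul_le_mul_of_nonneg_left hneg hα + mul_le_mul_of_nonneg_left hneg' hβ
  · rw [hsum]
    linear_combination mul_le_mul_of_nonneg_left hpos hα + mul_le_mul_of_nonneg_left hpos' hβ
  · rw [hsum, hy, hy']; ring
  · convert mul_add_mul_mem_scaled_bounds hα hβ (hza n) (hza' n) using 2 <;> ring
  · convert mul_add_mul_mem_scaled_bounds hα hβ (hzb n) (hzb' n) using 2 <;> ring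

theorem reluRelaxation_subset_convexHull (hw : ∀ n, w n ≠ 0) (hlu : ∀ n, l n ≤ u n) :
    reluRelaxation w b l u ⊆ convexHull ℝ (reluGraph w b l u) := by
  rintro ⟨x, y⟩ ⟨σ, zb, hσ₀, hσ₁, hneg, hpos, hy, hza, hzb⟩
  dsimp only at hneg hy hza
  choose xa hxa hwxa using fun n => exists_mem_Icc_of_mul_min_le hσ₀ (hlu n) (hza n).1 (hza n).2
  choose xb hxb hwxb using fun n =>
    exists_mem_Icc_of_mul_min_le (sub_nonneg.2 hσ₁) (hlu n) (hzb n).1 (hzb n).2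
  have hx : x = σ • xa + (1 - σ) • xb := funext fun n => mul_left_cancel₀ (hw n) <| by
    simp only [Pi.add_apply, Pi.smul_apply, smul_eq_mul]
    linear_combination hwxa n + hwxb n
  have hsb : ∑ n, zb n = (1 - σ) * ∑ n, w n * xb n := by simp only [hwxb, mul_sum]
  have hnega : σ * ((∑ n, w n * xa n) + b) ≤ 0 := by
    have : ∑ n, (w n * x n - zb n) = σ * ∑ n, w n * xa n := by simp only [hwxa, mul_sum]
    linarith
  have hposb : 0 ≤ (1 - σ) * ((∑ n, w n * xb n) + b) := by linarith
  have hpoint : (x, y) = σ • (xa, (0 : ℝ)) + (1 - σ) • (xb, (∑ n, w n * xb n) + b) := by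
    ext
    · simp [hx]
    · rw [hy, hsb]; simp only [Prod.snd_add, Prod.smul_snd, smul_eq_mul]; ring
  rw [hpoint]
  refine smul_add_one_sub_smul_mem_convexHull hσ₀ hσ₁ (fun h => ⟨hxa, ?_⟩) (fun h => ⟨hxb, ?_⟩)
  · exact (max_eq_left (nonpos_of_mul_nonpos_right hnega (h.lt_of_le' hσ₀))).symm
  · exact (max_eq_right (nonneg_of_mul_nonneg_right hposb (sub_pos.2 (h.lt_of_le hσ₁)))).symm

theorem reluRelaxation_eq_convexHull_reluGraph (hw : ∀ n, w n ≠ 0) (hlu : ∀ n, l n ≤ u n) :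
    reluRelaxation w b l u = convexHull ℝ (reluGraph w b l u) :=
  (reluRelaxation_subset_convexHull hw hlu).antisymm
    (convexHull_min reluGraph_subset_reluRelaxation convex_reluRelaxation)

end

/-- Proposition 3: with singleton partitions (N = η), the continuous relaxation
of the partition-based formulation, projected onto (x, y), is exactly the
convex hull of the graph of the ReLU node over the box domain. -/
theorem stmt_9 (η : ℕ) (w : Fin η → ℝ) (b : ℝ) (l u : Fin η → ℝ)
    (hw : ∀ n, w n ≠ 0) (hlu : ∀ n, l n ≤ u n) :
    {p : (Fin η → ℝ) × ℝ |
      ∃ (σ : ℝ) (zb : Fin η → ℝ),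
        0 ≤ σ ∧ σ ≤ 1 ∧
        (∑ n, (w n * p.1 n - zb n)) + σ * b ≤ 0 ∧
        (∑ n, zb n) + (1 - σ) * b ≥ 0 ∧
        p.2 = (∑ n, zb n) + (1 - σ) * b ∧
        (∀ n, σ * min (w n * l n) (w n * u n) ≤ w n * p.1 n - zb n ∧
              w n * p.1 n - zb n ≤ σ * max (w n * l n) (w n * u n)) ∧
        (∀ n, (1 - σ) * min (w n * l n) (w n * u n) ≤ zb n ∧
              zb n ≤ (1 - σ) * max (w n * l n) (w n * u n))} =
    convexHull ℝ
      {p : (Fin η → ℝ) × ℝ |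
        (∀ n, l n ≤ p.1 n ∧ p.1 n ≤ u n) ∧
        p.2 = max 0 ((∑ n, w n * p.1 n) + b)} :=
  reluRelaxation_eq_convexHull_reluGraph hw hlu
end

section
/- Let f(x) = max(0, wᵀx + b) on a box [l, u] with interval bounds LB⁰ < 0 < UB⁰ on wᵀx + b. Then there exists a point (x*, y*, σ*) with σ* ∈ [0,1] feasible for the big-M relaxation such that y* > the maximum over the convex hull at x*, whenever η ≥ 2 and w has at least two nonzero components; i.e., the big-M relaxation is in general strictly weaker than the convex hull. -/
private lemma chord_le (LB0 UB0 s : ℝ) (hneg : LB0 < 0) (hpos : 0 < UB0)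
    (hD : (0:ℝ) < UB0 - LB0) (ha : LB0 ≤ s) (hb : s ≤ UB0) :
    max 0 s ≤ UB0 * (s - LB0) / (UB0 - LB0) := by
  apply max_le
  · apply div_nonneg _ hD.le
    nlinarith
  · rw [le_div_iff₀ hD]
    nlinarith [mul_nonneg (by linarith : (0:ℝ) ≤ UB0 - s) (by linarith : (0:ℝ) ≤ -LB0)]

private lemma chord_lt (LB0 UB0 s : ℝ) (hneg : LB0 < 0) (hpos : 0 < UB0)
    (hD : (0:ℝ) < UB0 - LB0) (ha : LB0 < s) (hb : s < UB0) :
    max 0 s < UB0 * (s - LB0) / (UB0 - LB0) := by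
  rcases le_or_gt s 0 with h | h
  · rw [max_eq_left h]
    apply div_pos _ hD
    nlinarith
  · rw [max_eq_right h.le, lt_div_iff₀ hD]
    nlinarith [mul_pos (by linarith : (0:ℝ) < UB0 - s) (by linarith : (0:ℝ) < -LB0)]

private lemma relu_term_min {w lk uk xk : ℝ} (h1 : lk ≤ xk) (h2 : xk ≤ uk) :
    min (w * lk) (w * uk) ≤ w * xk := by
  rcases le_total 0 w with hw | hw
  · exact le_trans (min_le_left _ _) (by nlinarith)
  · exact le_trans (min_le_right _ _) (by nlinarith)

private lemma relu_term_max {w lk uk xk : ℝ} (h1 : lk ≤ xk) (h2 : xk ≤ uk) :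
    w * xk ≤ max (w * lk) (w * uk) := by
  rcases le_total 0 w with hw | hw
  · exact le_trans (by nlinarith) (le_max_right _ _)
  · exact le_trans (by nlinarith) (le_max_left _ _)

/-- The big-M relaxation of a ReLU node is in general strictly weaker than the
convex hull: when `w` has at least two nonzero components there is a big-M
feasible point `(x*, y*, σ*)` whose `y*` exceeds every value attainable over
the convex hull at `x*`. -/
theorem stmt_17 (η : ℕ) (w : Fin η → ℝ) (b : ℝ) (l u : Fin η → ℝ)
    (hη : 2 ≤ η)
    (hw : ∃ i j : Fin η, i ≠ j ∧ w i ≠ 0 ∧ w j ≠ 0)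
    (hbox : ∀ i, l i < u i)
    (LB0 UB0 : ℝ)
    (hLB0 : LB0 = (∑ i, min (w i * l i) (w i * u i)) + b)
    (hUB0 : UB0 = (∑ i, max (w i * l i) (w i * u i)) + b)
    (hneg : LB0 < 0) (hpos : 0 < UB0) :
    ∃ (xs : Fin η → ℝ) (ys σs : ℝ),
      (∀ i, l i ≤ xs i ∧ xs i ≤ u i) ∧
      0 ≤ σs ∧ σs ≤ 1 ∧
      ys ≥ 0 ∧ ys ≥ (∑ i, w i * xs i) + b ∧
      ys ≤ (∑ i, w i * xs i) + b - (1 - σs) * LB0 ∧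
      ys ≤ σs * UB0 ∧
      (∀ y : ℝ, (xs, y) ∈ convexHull ℝ
          {q : (Fin η → ℝ) × ℝ |
            (∀ i, l i ≤ q.1 i ∧ q.1 i ≤ u i) ∧
            q.2 = max 0 ((∑ i, w i * q.1 i) + b)} → y < ys) := by
  classical
  obtain ⟨i, j, hij, hwi, hwj⟩ := hw
  set xlo : Fin η → ℝ := fun k => if 0 ≤ w k then l k else u k with hxlo
  set xhi : Fin η → ℝ := fun k => if 0 ≤ w k then u k else l k with hxhi
  have hlo_mem : ∀ k, l k ≤ xlo k ∧ xlo k ≤ u k := by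
    intro k; by_cases h : 0 ≤ w k <;> simp [hxlo, h, (hbox k).le]
  have hhi_mem : ∀ k, l k ≤ xhi k ∧ xhi k ≤ u k := by
    intro k; by_cases h : 0 ≤ w k <;> simp [hxhi, h, (hbox k).le]
  have hlo_eq : ∀ k, w k * xlo k = min (w k * l k) (w k * u k) := by
    intro k; by_cases h : 0 ≤ w k
    · simp only [hxlo, if_pos h]
      rw [min_eq_left (by nlinarith [hbox k])]
    · push_neg at h
      simp only [hxlo, if_neg (not_le.2 h)]
      rw [min_eq_right (by nlinarith [hbox k])]
  have hhi_eq : ∀ k, w k * xhi k = max (w k * l k) (w k * u k) := by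
    intro k; by_cases h : 0 ≤ w k
    · simp only [hxhi, if_pos h]
      rw [max_eq_right (by nlinarith [hbox k])]
    · push_neg at h
      simp only [hxhi, if_neg (not_le.2 h)]
      rw [max_eq_left (by nlinarith [hbox k])]
  set xs : Fin η → ℝ := fun k => if k = i then xhi i else
      if k = j then (l j + u j) / 2 else xlo k with hxs
  have hxsi : xs i = xhi i := by simp [hxs]
  have hxsj : xs j = (l j + u j) / 2 := by
    simp [hxs, Ne.symm hij]
  have hxs_mem : ∀ k, l k ≤ xs k ∧ xs k ≤ u k := by
    intro k
    by_cases h1 : k = i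
    · subst h1; rw [hxsi]; exact hhi_mem k
    · by_cases h2 : k = j
      · subst h2; rw [hxsj]
        constructor <;> [linarith [hbox k]; linarith [hbox k]]
      · simp only [hxs, if_neg h1, if_neg h2]; exact hlo_mem k
  have hsum_lb : ∀ x : Fin η → ℝ, (∀ k, l k ≤ x k ∧ x k ≤ u k) →
      LB0 ≤ (∑ k, w k * x k) + b := by
    intro x hx; rw [hLB0]
    have hle : ∑ k, min (w k * l k) (w k * u k) ≤ ∑ k, w k * x k :=
      Finset.sum_le_sum (fun k _ => relu_term_min (hx k).1 (hx k).2)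
    linarith
  have hsum_ub : ∀ x : Fin η → ℝ, (∀ k, l k ≤ x k ∧ x k ≤ u k) →
      (∑ k, w k * x k) + b ≤ UB0 := by
    intro x hx; rw [hUB0]
    have hle : ∑ k, w k * x k ≤ ∑ k, max (w k * l k) (w k * u k) :=
      Finset.sum_le_sum (fun k _ => relu_term_max (hx k).1 (hx k).2)
    linarith
  -- strict bounds at xs
  have hjmin : min (w j * l j) (w j * u j) < w j * ((l j + u j) / 2) := by
    rcases hwj.lt_or_gt with h | h
    · rw [min_eq_right (by nlinarith [hbox j])]; nlinarith [hbox j]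
    · rw [min_eq_left (by nlinarith [hbox j])]; nlinarith [hbox j]
  have hjmax : w j * ((l j + u j) / 2) < max (w j * l j) (w j * u j) := by
    rcases hwj.lt_or_gt with h | h
    · rw [max_eq_left (by nlinarith [hbox j])]; nlinarith [hbox j]
    · rw [max_eq_right (by nlinarith [hbox j])]; nlinarith [hbox j]
  set S : ℝ := (∑ k, w k * xs k) + b with hS
  have hslb : LB0 < S := by
    rw [hLB0, hS]
    have : ∑ k, min (w k * l k) (w k * u k) < ∑ k, w k * xs k := by
      apply Finset.sum_lt_sum
      · intro k _; exact relu_term_min (hxs_mem k).1 (hxs_mem k).2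
      · exact ⟨j, Finset.mem_univ j, by rw [hxsj]; exact hjmin⟩
    linarith
  have hsub : S < UB0 := by
    rw [hUB0, hS]
    have : ∑ k, w k * xs k < ∑ k, max (w k * l k) (w k * u k) := by
      apply Finset.sum_lt_sum
      · intro k _; exact relu_term_max (hxs_mem k).1 (hxs_mem k).2
      · exact ⟨j, Finset.mem_univ j, by rw [hxsj]; exact hjmax⟩
    linarith
  have hD : (0:ℝ) < UB0 - LB0 := by linarith
  set σs : ℝ := (S - LB0) / (UB0 - LB0) with hσ
  set ys : ℝ := σs * UB0 with hys
  have hσ0 : 0 ≤ σs := div_nonneg (by linarith) hD.le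
  have hσ1 : σs ≤ 1 := (div_le_one hD).2 (by linarith)
  have hys_eq : ys = UB0 * (S - LB0) / (UB0 - LB0) := by
    rw [hys, hσ]; ring
  refine ⟨xs, ys, σs, hxs_mem, hσ0, hσ1, ?_, ?_, ?_, ?_, ?_⟩
  · exact mul_nonneg hσ0 hpos.le
  · show ys ≥ S
    rw [hys_eq, ge_iff_le, le_div_iff₀ hD]
    nlinarith [mul_nonneg (by linarith : (0:ℝ) ≤ UB0 - S) (by linarith : (0:ℝ) ≤ -LB0)]
  · show ys ≤ S - (1 - σs) * LB0
    have hkey : σs * UB0 = S - (1 - σs) * LB0 := by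
      rw [hσ]; field_simp; ring
    rw [hys]; linarith [hkey.le]
  · exact le_refl ys
  · intro y hy
    rw [convexHull_eq] at hy
    obtain ⟨ι, t, lam, z, h0, h1, hmem, hcm⟩ := hy
    have hcm' : ∑ m ∈ t, lam m • z m = (xs, y) := by
      rw [Finset.centerMass, h1, inv_one, one_smul] at hcm; exact hcm
    have hy_eq : y = ∑ m ∈ t, lam m * (z m).2 := by
      have h2 := congrArg Prod.snd hcm'
      rw [Prod.snd_sum] at h2
      simp only [Prod.smul_snd, smul_eq_mul] at h2
      exact h2.symm
    have hx_comb : ∀ k, (∑ m ∈ t, lam m * (z m).1 k) = xs k := by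
      intro k
      have h2 := congrArg Prod.fst hcm'
      rw [Prod.fst_sum] at h2
      have h3 := congrFun h2 k
      simpa [Finset.sum_apply, Prod.smul_fst, Pi.smul_apply, smul_eq_mul] using h3
    set sm : ι → ℝ := fun m => (∑ k, w k * (z m).1 k) + b with hsm
    have hsmbound : ∀ m ∈ t, LB0 ≤ sm m ∧ sm m ≤ UB0 := fun m hm =>
      ⟨hsum_lb _ (hmem m hm).1, hsum_ub _ (hmem m hm).1⟩
    have hz2 : ∀ m ∈ t, (z m).2 = max 0 (sm m) := fun m hm => (hmem m hm).2
    have hs_comb : ∑ m ∈ t, lam m * sm m = S := by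
      have e : ∀ m ∈ t, lam m * sm m =
          (∑ k, lam m * (w k * (z m).1 k)) + lam m * b := by
        intro m _; rw [hsm]; rw [mul_add, Finset.mul_sum]
      rw [Finset.sum_congr rfl e, Finset.sum_add_distrib, ← Finset.sum_mul, h1,
        one_mul, Finset.sum_comm, hS]
      congr 1
      apply Finset.sum_congr rfl
      intro k _
      rw [← hx_comb k, Finset.mul_sum]
      apply Finset.sum_congr rfl
      intro m _; ring
    have hL_le : ∀ s : ℝ, LB0 ≤ s → s ≤ UB0 →
        max 0 s ≤ UB0 * (s - LB0) / (UB0 - LB0) :=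
      fun s ha hb => chord_le LB0 UB0 s hneg hpos hD ha hb
    have hL_lt : ∀ s : ℝ, LB0 < s → s < UB0 →
        max 0 s < UB0 * (s - LB0) / (UB0 - LB0) :=
      fun s ha hb => chord_lt LB0 UB0 s hneg hpos hD ha hb
    have hex : ∃ m ∈ t, 0 < lam m ∧ LB0 < sm m ∧ sm m < UB0 := by
      by_contra hcon
      push_neg at hcon
      have hcases : ∀ m ∈ t, 0 < lam m → sm m = LB0 ∨ sm m = UB0 := by
        intro m hm hl
        rcases eq_or_lt_of_le (hsmbound m hm).1 with h | h
        · exact Or.inl h.symm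
        · exact Or.inr (le_antisymm (hsmbound m hm).2 (hcon m hm hl h))
      have hpin : ∀ m ∈ t, 0 < lam m →
          ((z m).1 i = xlo i ∧ (z m).1 j = xlo j) ∨
          ((z m).1 i = xhi i ∧ (z m).1 j = xhi j) := by
        intro m hm hl
        have hz := (hmem m hm).1
        rcases hcases m hm hl with h | h
        · left
          have hh : ∑ k, w k * (z m).1 k = ∑ k, min (w k * l k) (w k * u k) := by
            have h' : (∑ k, w k * (z m).1 k) + b = LB0 := h
            rw [hLB0] at h'; linarith
          have h0' : ∑ k, (w k * (z m).1 k - min (w k * l k) (w k * u k)) = 0 := by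
            rw [Finset.sum_sub_distrib, hh, sub_self]
          have hterm := (Finset.sum_eq_zero_iff_of_nonneg
            (fun k _ => sub_nonneg.2 (relu_term_min (hz k).1 (hz k).2))).1 h0'
          constructor
          · have hti := hterm i (Finset.mem_univ i)
            have : w i * (z m).1 i = w i * xlo i := by rw [hlo_eq i]; linarith
            exact mul_left_cancel₀ hwi this
          · have htj := hterm j (Finset.mem_univ j)
            have : w j * (z m).1 j = w j * xlo j := by rw [hlo_eq j]; linarith
            exact mul_left_cancel₀ hwj this
        · right
          have hh : ∑ k, w k * (z m).1 k = ∑ k, max (w k * l k) (w k * u k) := by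
            have h' : (∑ k, w k * (z m).1 k) + b = UB0 := h
            rw [hUB0] at h'; linarith
          have h0' : ∑ k, (max (w k * l k) (w k * u k) - w k * (z m).1 k) = 0 := by
            rw [Finset.sum_sub_distrib, hh, sub_self]
          have hterm := (Finset.sum_eq_zero_iff_of_nonneg
            (fun k _ => sub_nonneg.2 (relu_term_max (hz k).1 (hz k).2))).1 h0'
          constructor
          · have hti := hterm i (Finset.mem_univ i)
            have : w i * (z m).1 i = w i * xhi i := by rw [hhi_eq i]; linarith
            exact mul_left_cancel₀ hwi this
          · have htj := hterm j (Finset.mem_univ j)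
            have : w j * (z m).1 j = w j * xhi j := by rw [hhi_eq j]; linarith
            exact mul_left_cancel₀ hwj this
      have hA : xhi i - xlo i ≠ 0 := by
        rcases le_or_gt 0 (w i) with h | h
        · simp only [hxhi, hxlo, if_pos h]; exact sub_ne_zero.2 (hbox i).ne'
        · simp only [hxhi, hxlo, if_neg (not_le.2 h)]; exact sub_ne_zero.2 (hbox i).ne
      have hB2 : xhi j - xlo j ≠ 0 := by
        rcases le_or_gt 0 (w j) with h | h
        · simp only [hxhi, hxlo, if_pos h]; exact sub_ne_zero.2 (hbox j).ne'
        · simp only [hxhi, hxlo, if_neg (not_le.2 h)]; exact sub_ne_zero.2 (hbox j).ne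
      have hzero : ∑ m ∈ t, lam m * (((z m).1 i - xlo i) * (xhi j - xlo j)
          - ((z m).1 j - xlo j) * (xhi i - xlo i)) = 0 := by
        apply Finset.sum_eq_zero
        intro m hm
        rcases eq_or_lt_of_le (h0 m hm) with h | h
        · rw [← h, zero_mul]
        · rcases hpin m hm h with ⟨e1, e2⟩ | ⟨e1, e2⟩ <;> rw [e1, e2] <;> ring
      have hval : ∑ m ∈ t, lam m * (((z m).1 i - xlo i) * (xhi j - xlo j)
          - ((z m).1 j - xlo j) * (xhi i - xlo i)) =
          (xs i - xlo i) * (xhi j - xlo j) - (xs j - xlo j) * (xhi i - xlo i) := by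
        have e : ∀ m ∈ t, lam m * (((z m).1 i - xlo i) * (xhi j - xlo j)
            - ((z m).1 j - xlo j) * (xhi i - xlo i)) =
            (lam m * (z m).1 i) * (xhi j - xlo j) - (lam m * (z m).1 j) * (xhi i - xlo i)
              - lam m * (xlo i * (xhi j - xlo j) - xlo j * (xhi i - xlo i)) := by
          intro m _; ring
        rw [Finset.sum_congr rfl e, Finset.sum_sub_distrib, Finset.sum_sub_distrib,
          ← Finset.sum_mul, ← Finset.sum_mul, ← Finset.sum_mul, hx_comb i, hx_comb j,
          h1, one_mul]
        ring
      have hmidj : xhi j + xlo j = l j + u j := by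
        rcases le_or_gt 0 (w j) with h | h
        · simp only [hxhi, hxlo, if_pos h]; ring
        · simp only [hxhi, hxlo, if_neg (not_le.2 h)]
      have hfin : (xs i - xlo i) * (xhi j - xlo j) - (xs j - xlo j) * (xhi i - xlo i)
          = 0 := by rw [← hval, hzero]
      rw [hxsi, hxsj] at hfin
      have : (xhi i - xlo i) * (xhi j - xlo j) = 0 := by
        linear_combination 2 * hfin - (xhi i - xlo i) * hmidj
      exact (mul_ne_zero hA hB2) this
    obtain ⟨m0, hm0, hlam0, hlb0, hub0⟩ := hex
    have hlt : ∑ m ∈ t, lam m * (z m).2 <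
        ∑ m ∈ t, lam m * (UB0 * (sm m - LB0) / (UB0 - LB0)) := by
      apply Finset.sum_lt_sum
      · intro m hm
        rw [hz2 m hm]
        exact mul_le_mul_of_nonneg_left
          (hL_le (sm m) (hsmbound m hm).1 (hsmbound m hm).2) (h0 m hm)
      · refine ⟨m0, hm0, ?_⟩
        rw [hz2 m0 hm0]
        exact (mul_lt_mul_iff_right₀ hlam0).2 (hL_lt _ hlb0 hub0)
    have hsum_L : ∑ m ∈ t, lam m * (UB0 * (sm m - LB0) / (UB0 - LB0)) =
        UB0 * (S - LB0) / (UB0 - LB0) := by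
      have e : ∀ m ∈ t, lam m * (UB0 * (sm m - LB0) / (UB0 - LB0)) =
          (lam m * sm m) * (UB0 / (UB0 - LB0)) - lam m * (UB0 * LB0 / (UB0 - LB0)) := by
        intro m _; field_simp
      rw [Finset.sum_congr rfl e, Finset.sum_sub_distrib, ← Finset.sum_mul,
        ← Finset.sum_mul, h1, one_mul, hs_comb]
      field_simp
    rw [hy_eq, hys_eq, ← hsum_L]
    exact hlt
end
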